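/- arXiv:1911.00117 — 2 statements merged into one kernel-verified Lean document; each statement's English description precedes it below -/
import Mathlib

section
/- Let ℓ ∈ ℂ. For a function ṽ : ℝ∖{0} → ℂ the following are equivalent: (i) there exists a smooth, even, homogeneous-of-degree-2ℓ function v : ℝ²∖{0} → ℂ with ṽ(x) = v( x/√|x| , 1/√|x| ) for all x ≠ 0; (ii) there exist smooth functions h₁, h₂ : ℝ → ℂ such that h₁(x) = |x|^{ℓ}·ṽ(x) and h₂(x) = |x|^{ℓ}·ṽ(1/x) for all x ≠ 0, where |x|^{ℓ} := exp(ℓ·log|x|). -/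
/-- `v : ℝ² \ {0} → ℂ` (modelled as `v : ℝ × ℝ → ℂ`, with all conditions imposed away
from the origin) is smooth, even and homogeneous of degree `2ℓ`. -/
def IsSmoothEvenHom (ℓ : ℂ) (v : ℝ × ℝ → ℂ) : Prop :=
  ContDiffOn ℝ (⊤ : ℕ∞) v {x : ℝ × ℝ | x ≠ 0} ∧
  (∀ x : ℝ × ℝ, x ≠ 0 → v (-x) = v x) ∧
  (∀ τ : ℝ, 0 < τ → ∀ x : ℝ × ℝ, x ≠ 0 → v (τ • x) = Complex.exp (2 * ℓ * Real.log τ) * v x)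

private lemma pair_ne_snd {a b : ℝ} (hb : b ≠ 0) : ((a, b) : ℝ × ℝ) ≠ 0 :=
  fun h => hb (congrArg Prod.snd h)

private lemma pair_ne_fst {a b : ℝ} (ha : a ≠ 0) : ((a, b) : ℝ × ℝ) ≠ 0 :=
  fun h => ha (congrArg Prod.fst h)

private lemma fst_ne_of {x : ℝ × ℝ} (hx : x ≠ 0) (h2 : x.2 = 0) : x.1 ≠ 0 :=
  fun h1 => hx (Prod.ext h1 h2)

private lemma expc_mul (c : ℂ) {τ a : ℝ} (hτ : 0 < τ) (ha : a ≠ 0) :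
    Complex.exp (c * Real.log |τ * a|) =
      Complex.exp (c * Real.log τ) * Complex.exp (c * Real.log |a|) := by
  rw [abs_mul, abs_of_pos hτ, Real.log_mul hτ.ne' (abs_ne_zero.2 ha), ← Complex.exp_add]
  push_cast
  ring_nf

private lemma expc_contDiffOn (c : ℂ) :
    ContDiffOn ℝ (⊤ : ℕ∞) (fun t : ℝ => Complex.exp (c * Real.log t)) {0}ᶜ := by
  have h2 : ContDiffOn ℝ (⊤ : ℕ∞) (fun t : ℝ => ((Real.log t : ℝ) : ℂ)) {0}ᶜ :=
    Complex.ofRealCLM.contDiff.comp_contDiffOn Real.contDiffOn_log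
  exact (contDiffOn_const.mul h2).cexp

/-- The first extension function. -/
private noncomputable def Fone (ℓ : ℂ) (h₂ : ℝ → ℂ) (x : ℝ × ℝ) : ℂ :=
  Complex.exp (2 * ℓ * Real.log |x.1|) * h₂ (x.2 / x.1)

/-- The second extension function. -/
private noncomputable def Ftwo (ℓ : ℂ) (h₁ : ℝ → ℂ) (x : ℝ × ℝ) : ℂ :=
  Complex.exp (2 * ℓ * Real.log |x.2|) * h₁ (x.1 / x.2)

/-- The glued extension function. -/
private noncomputable def Vdef (ℓ : ℂ) (h₁ h₂ : ℝ → ℂ) (x : ℝ × ℝ) : ℂ :=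
  if x.2 = 0 then Fone ℓ h₂ x else Ftwo ℓ h₁ x

private lemma Fone_smooth (ℓ : ℂ) {h₂ : ℝ → ℂ} (hh : ContDiff ℝ (⊤ : ℕ∞) h₂) :
    ContDiffOn ℝ (⊤ : ℕ∞) (Fone ℓ h₂) {x : ℝ × ℝ | x.1 ≠ 0} := by
  have hs : (fun x : ℝ × ℝ => Complex.exp (2 * ℓ * Real.log |x.1|)) =
      (fun x : ℝ × ℝ => Complex.exp (2 * ℓ * Real.log x.1)) := by
    funext x; rw [Real.log_abs]
  have h1 : ContDiffOn ℝ (⊤ : ℕ∞) (fun x : ℝ × ℝ => Complex.exp (2 * ℓ * Real.log x.1))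
      {x : ℝ × ℝ | x.1 ≠ 0} :=
    (expc_contDiffOn (2 * ℓ)).comp contDiff_fst.contDiffOn (fun x hx => hx)
  have h2 : ContDiffOn ℝ (⊤ : ℕ∞) (fun x : ℝ × ℝ => h₂ (x.2 / x.1)) {x : ℝ × ℝ | x.1 ≠ 0} :=
    hh.comp_contDiffOn
      (ContDiffOn.div contDiff_snd.contDiffOn contDiff_fst.contDiffOn fun x hx => hx)
  unfold Fone
  rw [show (fun x : ℝ × ℝ => Complex.exp (2 * ℓ * Real.log |x.1|) * h₂ (x.2 / x.1)) =
      (fun x : ℝ × ℝ => Complex.exp (2 * ℓ * Real.log x.1) * h₂ (x.2 / x.1)) by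
    funext x; rw [Real.log_abs]]
  exact h1.mul h2

private lemma Ftwo_smooth (ℓ : ℂ) {h₁ : ℝ → ℂ} (hh : ContDiff ℝ (⊤ : ℕ∞) h₁) :
    ContDiffOn ℝ (⊤ : ℕ∞) (Ftwo ℓ h₁) {x : ℝ × ℝ | x.2 ≠ 0} := by
  have h1 : ContDiffOn ℝ (⊤ : ℕ∞) (fun x : ℝ × ℝ => Complex.exp (2 * ℓ * Real.log x.2))
      {x : ℝ × ℝ | x.2 ≠ 0} :=
    (expc_contDiffOn (2 * ℓ)).comp contDiff_snd.contDiffOn (fun x hx => hx)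
  have h2 : ContDiffOn ℝ (⊤ : ℕ∞) (fun x : ℝ × ℝ => h₁ (x.1 / x.2)) {x : ℝ × ℝ | x.2 ≠ 0} :=
    hh.comp_contDiffOn
      (ContDiffOn.div contDiff_fst.contDiffOn contDiff_snd.contDiffOn fun x hx => hx)
  unfold Ftwo
  rw [show (fun x : ℝ × ℝ => Complex.exp (2 * ℓ * Real.log |x.2|) * h₁ (x.1 / x.2)) =
      (fun x : ℝ × ℝ => Complex.exp (2 * ℓ * Real.log x.2) * h₁ (x.1 / x.2)) by
    funext x; rw [Real.log_abs]]
  exact h1.mul h2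

private lemma Fone_even (ℓ : ℂ) (h₂ : ℝ → ℂ) (x : ℝ × ℝ) : Fone ℓ h₂ (-x) = Fone ℓ h₂ x := by
  unfold Fone
  rw [Prod.fst_neg, Prod.snd_neg, abs_neg, neg_div_neg_eq]

private lemma Ftwo_even (ℓ : ℂ) (h₁ : ℝ → ℂ) (x : ℝ × ℝ) : Ftwo ℓ h₁ (-x) = Ftwo ℓ h₁ x := by
  unfold Ftwo
  rw [Prod.fst_neg, Prod.snd_neg, abs_neg, neg_div_neg_eq]

private lemma Fone_hom (ℓ : ℂ) (h₂ : ℝ → ℂ) {τ : ℝ} (hτ : 0 < τ) {x : ℝ × ℝ} (hx : x.1 ≠ 0) :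
    Fone ℓ h₂ (τ • x) = Complex.exp (2 * ℓ * Real.log τ) * Fone ℓ h₂ x := by
  unfold Fone
  rw [Prod.smul_fst, Prod.smul_snd, smul_eq_mul, smul_eq_mul,
    mul_div_mul_left _ _ hτ.ne', expc_mul (2 * ℓ) hτ hx, mul_assoc]

private lemma Ftwo_hom (ℓ : ℂ) (h₁ : ℝ → ℂ) {τ : ℝ} (hτ : 0 < τ) {x : ℝ × ℝ} (hx : x.2 ≠ 0) :
    Ftwo ℓ h₁ (τ • x) = Complex.exp (2 * ℓ * Real.log τ) * Ftwo ℓ h₁ x := by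
  unfold Ftwo
  rw [Prod.smul_fst, Prod.smul_snd, smul_eq_mul, smul_eq_mul,
    mul_div_mul_left _ _ hτ.ne', expc_mul (2 * ℓ) hτ hx, mul_assoc]

/-- a function `ṽ : ℝ∖{0} → ℂ` is the hyperbola realisation
`ṽ(x) = v(x/√|x|, 1/√|x|)` of some smooth even homogeneous-of-degree-`2ℓ` function `v`
on `ℝ² \ {0}` if and only if both `x ↦ |x|^ℓ·ṽ(x)` and `x ↦ |x|^ℓ·ṽ(1/x)` extend to
smooth functions on `ℝ`, where `|x|^ℓ := exp(ℓ·log|x|)`. -/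
theorem stmt18 (ℓ : ℂ) (vt : ℝ → ℂ) :
    (∃ v : ℝ × ℝ → ℂ, IsSmoothEvenHom ℓ v ∧
      ∀ x : ℝ, x ≠ 0 → vt x = v (x / Real.sqrt |x|, 1 / Real.sqrt |x|)) ↔
    (∃ h₁ h₂ : ℝ → ℂ, ContDiff ℝ (⊤ : ℕ∞) h₁ ∧ ContDiff ℝ (⊤ : ℕ∞) h₂ ∧
      (∀ x : ℝ, x ≠ 0 → h₁ x = Complex.exp (ℓ * Real.log |x|) * vt x) ∧
      (∀ x : ℝ, x ≠ 0 → h₂ x = Complex.exp (ℓ * Real.log |x|) * vt (1 / x))) := by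
  constructor
  · rintro ⟨v, ⟨hv_smooth, hv_even, hv_hom⟩, hv_eq⟩
    -- key claim : v (y, 1) = exp(ℓ log |y|) * vt y
    have hclaim : ∀ y : ℝ, y ≠ 0 → v (y, 1) = Complex.exp (ℓ * Real.log |y|) * vt y := by
      intro y hy
      have hs : (0 : ℝ) < Real.sqrt |y| := Real.sqrt_pos.2 (abs_pos.2 hy)
      have hne : ((y / Real.sqrt |y|, 1 / Real.sqrt |y|) : ℝ × ℝ) ≠ 0 :=
        pair_ne_snd (one_div_ne_zero hs.ne')
      have hsmul : Real.sqrt |y| • ((y / Real.sqrt |y|, 1 / Real.sqrt |y|) : ℝ × ℝ)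
          = ((y, 1) : ℝ × ℝ) := by
        rw [Prod.smul_mk, smul_eq_mul, smul_eq_mul, mul_div_cancel₀ _ hs.ne',
          mul_one_div, div_self hs.ne']
      have hkey := hv_hom (Real.sqrt |y|) hs _ hne
      rw [hsmul] at hkey
      rw [hkey, ← hv_eq y hy]
      have harg : (2 * ℓ * (Real.log (Real.sqrt |y|) : ℂ)) = ℓ * (Real.log |y| : ℂ) := by
        rw [Real.log_sqrt (abs_nonneg y)]
        push_cast
        ring
      rw [harg]
    refine ⟨fun x => v (x, 1), fun x => v (1, x), ?_, ?_, ?_, ?_⟩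
    · have hmap : ContDiff ℝ (⊤ : ℕ∞) (fun x : ℝ => ((x, (1 : ℝ)) : ℝ × ℝ)) :=
        contDiff_id.prodMk contDiff_const
      have h := hv_smooth.comp (hmap.contDiffOn (s := Set.univ))
        (fun x _ => show ((x, (1:ℝ)) : ℝ × ℝ) ∈ {p : ℝ × ℝ | p ≠ 0} from pair_ne_snd one_ne_zero)
      exact contDiffOn_univ.mp h
    · have hmap : ContDiff ℝ (⊤ : ℕ∞) (fun x : ℝ => (((1 : ℝ), x) : ℝ × ℝ)) :=
        contDiff_const.prodMk contDiff_id
      have h := hv_smooth.comp (hmap.contDiffOn (s := Set.univ))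
        (fun x _ => show (((1:ℝ), x) : ℝ × ℝ) ∈ {p : ℝ × ℝ | p ≠ 0} from pair_ne_fst one_ne_zero)
      exact contDiffOn_univ.mp h
    · intro x hx
      exact hclaim x hx
    · intro x hx
      have habs : (0 : ℝ) < |x| := abs_pos.2 hx
      have hc := hclaim (1 / x) (one_div_ne_zero hx)
      have hkey := hv_hom |x| habs (1 / x, 1) (pair_ne_snd one_ne_zero)
      have hpt : v (|x| • (((1 : ℝ) / x, (1 : ℝ)) : ℝ × ℝ)) = v (1, x) := by
        rcases hx.lt_or_gt with hneg | hpos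
        · have hpt2 : |x| • (((1 : ℝ) / x, (1 : ℝ)) : ℝ × ℝ) = -(((1 : ℝ), x) : ℝ × ℝ) := by
            rw [abs_of_neg hneg, Prod.neg_mk, Prod.smul_mk, smul_eq_mul, smul_eq_mul, mul_one]
            refine Prod.ext ?_ rfl
            show -x * (1 / x) = -1
            rw [mul_one_div, neg_div, div_self hx]
          rw [hpt2, hv_even _ (pair_ne_fst one_ne_zero)]
        · have hpt2 : |x| • (((1 : ℝ) / x, (1 : ℝ)) : ℝ × ℝ) = (((1 : ℝ), x) : ℝ × ℝ) := by
            rw [abs_of_pos hpos, Prod.smul_mk, smul_eq_mul, smul_eq_mul, mul_one,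
              mul_one_div, div_self hx]
          rw [hpt2]
      rw [hpt] at hkey
      show v (1, x) = Complex.exp (ℓ * Real.log |x|) * vt (1 / x)
      rw [hkey, hc, ← mul_assoc, ← Complex.exp_add]
      have harg : 2 * ℓ * (Real.log |x| : ℂ) + ℓ * (Real.log |1 / x| : ℂ)
          = ℓ * (Real.log |x| : ℂ) := by
        rw [one_div, abs_inv, Real.log_inv]
        push_cast
        ring
      rw [harg]
  · rintro ⟨h₁, h₂, hh₁, hh₂, he₁, he₂⟩
    have hcompat : ∀ t : ℝ, t ≠ 0 →
        h₁ t = Complex.exp (2 * ℓ * Real.log |t|) * h₂ (1 / t) := by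
      intro t ht
      rw [he₁ t ht, he₂ (1 / t) (one_div_ne_zero ht), one_div_one_div, ← mul_assoc,
        ← Complex.exp_add]
      have harg : (ℓ * (Real.log |t| : ℂ)) =
          2 * ℓ * (Real.log |t| : ℂ) + ℓ * (Real.log |1 / t| : ℂ) := by
        rw [one_div, abs_inv, Real.log_inv]
        push_cast
        ring
      rw [harg]
    have hagree : ∀ x : ℝ × ℝ, x.1 ≠ 0 → x.2 ≠ 0 → Fone ℓ h₂ x = Ftwo ℓ h₁ x := by
      intro x hx1 hx2
      unfold Fone Ftwo
      rw [hcompat (x.1 / x.2) (div_ne_zero hx1 hx2), one_div_div, ← mul_assoc,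
        ← Complex.exp_add]
      have harg : 2 * ℓ * (Real.log |x.1| : ℂ) =
          2 * ℓ * (Real.log |x.2| : ℂ) + 2 * ℓ * (Real.log |x.1 / x.2| : ℂ) := by
        rw [abs_div, Real.log_div (abs_ne_zero.2 hx1) (abs_ne_zero.2 hx2)]
        push_cast
        ring
      rw [harg]
    have hV1 : ∀ x : ℝ × ℝ, x.1 ≠ 0 → Vdef ℓ h₁ h₂ x = Fone ℓ h₂ x := by
      intro x hx1
      unfold Vdef
      by_cases h2 : x.2 = 0
      · rw [if_pos h2]
      · rw [if_neg h2, hagree x hx1 h2]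
    have hV2 : ∀ x : ℝ × ℝ, x.2 ≠ 0 → Vdef ℓ h₁ h₂ x = Ftwo ℓ h₁ x := by
      intro x hx2
      unfold Vdef
      rw [if_neg hx2]
    have hopen1 : IsOpen {x : ℝ × ℝ | x.1 ≠ 0} :=
      isOpen_compl_singleton.preimage continuous_fst
    have hopen2 : IsOpen {x : ℝ × ℝ | x.2 ≠ 0} :=
      isOpen_compl_singleton.preimage continuous_snd
    refine ⟨Vdef ℓ h₁ h₂, ⟨?_, ?_, ?_⟩, ?_⟩
    · -- smoothness
      apply contDiffOn_of_locally_contDiffOn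
      intro x hx
      by_cases h2 : x.2 = 0
      · refine ⟨{x : ℝ × ℝ | x.1 ≠ 0}, hopen1, fst_ne_of hx h2, ?_⟩
        exact (((Fone_smooth ℓ hh₂).congr fun y hy => hV1 y hy).mono
          Set.inter_subset_right)
      · refine ⟨{x : ℝ × ℝ | x.2 ≠ 0}, hopen2, h2, ?_⟩
        exact (((Ftwo_smooth ℓ hh₁).congr fun y hy => hV2 y hy).mono
          Set.inter_subset_right)
    · -- evenness
      intro x hx
      unfold Vdef
      simp only [Prod.snd_neg, neg_eq_zero, Fone_even, Ftwo_even]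
    · -- homogeneity
      intro τ hτ x hx
      by_cases h2 : x.2 = 0
      · have hx1 : x.1 ≠ 0 := fst_ne_of hx h2
        have hτx1 : (τ • x).1 ≠ 0 := by
          rw [Prod.smul_fst, smul_eq_mul]
          exact mul_ne_zero hτ.ne' hx1
        rw [hV1 _ hτx1, hV1 _ hx1, Fone_hom ℓ h₂ hτ hx1]
      · have hτx2 : (τ • x).2 ≠ 0 := by
          rw [Prod.smul_snd, smul_eq_mul]
          exact mul_ne_zero hτ.ne' h2
        rw [hV2 _ hτx2, hV2 _ h2, Ftwo_hom ℓ h₁ hτ h2]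
    · -- the hyperbola realisation property
      intro x hx
      have hs : (0 : ℝ) < Real.sqrt |x| := Real.sqrt_pos.2 (abs_pos.2 hx)
      rw [hV2 _ (show ((x / Real.sqrt |x|, 1 / Real.sqrt |x|) : ℝ × ℝ).2 ≠ 0 from
        one_div_ne_zero hs.ne')]
      unfold Ftwo
      simp only
      have hdiv : x / Real.sqrt |x| / (1 / Real.sqrt |x|) = x := by
        field_simp
      rw [hdiv, he₁ x hx, ← mul_assoc, ← Complex.exp_add]
      have harg : 2 * ℓ * (Real.log (abs (1 / Real.sqrt |x|)) : ℂ) + ℓ * (Real.log |x| : ℂ)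
          = 0 := by
        rw [one_div, abs_inv, abs_of_pos hs, Real.log_inv, Real.log_sqrt (abs_nonneg x)]
        push_cast
        ring
      rw [harg, Complex.exp_zero, one_mul]
end

section
/- Let p > 0 and ρ > 0. Suppose f : ℝ → ℂ is differentiable, f(0) = 1, and f satisfies the Dyson–Schmidt equation (1 − i·s/p)·( f(s) − (s/ρ)·f'(s) ) = f(s) for all s ∈ ℝ. Then |f(s)| = ((s² + p²)/p²)^{ρ/2} for all s ∈ ℝ; in particular |f(s)| > 1 for every s ≠ 0, and consequently there is no probability measure μ on ℝ such that f(s) = ∫_ℝ e^{isx} dμ(x) for all s ∈ ℝ (since any characteristic function is bounded in modulus by 1). Hence the random product of matrices of type n₋(t)·a₁(τ), with t exponentially distributed of mean 1/p and τ exponentially distributed of mean 1/ρ, admits no invariant probability measure on the Furstenberg boundary. -/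
open MeasureTheory

/-- any differentiable solution of the Dyson–Schmidt equation
`(1 - is/p)·(f(s) - (s/ρ)·f'(s)) = f(s)` with `f(0) = 1` satisfies
`|f(s)| = ((s²+p²)/p²)^{ρ/2}`, so `|f(s)| > 1` for `s ≠ 0`, and hence `f` is not the
characteristic function of any probability measure on `ℝ`: the random product of type
`n₋·a₁` admits no invariant probability measure on the Furstenberg boundary. -/
theorem stmt19 (p ρ : ℝ) (hp : 0 < p) (hρ : 0 < ρ)
    (f : ℝ → ℂ) (hf : Differentiable ℝ f) (hf0 : f 0 = 1)
    (hDS : ∀ s : ℝ,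
      (1 - Complex.I * (s : ℂ) / (p : ℂ)) * (f s - ((s : ℂ) / (ρ : ℂ)) * deriv f s) = f s) :
    (∀ s : ℝ, ‖f s‖ = ((s ^ 2 + p ^ 2) / p ^ 2) ^ (ρ / 2)) ∧
    (∀ s : ℝ, s ≠ 0 → 1 < ‖f s‖) ∧
    ¬∃ μ : Measure ℝ, IsProbabilityMeasure μ ∧
      ∀ s : ℝ, f s = ∫ x : ℝ, Complex.exp (Complex.I * (s : ℂ) * (x : ℂ)) ∂μ := by
  have hp' : (p : ℂ) ≠ 0 := by exact_mod_cast hp.ne'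
  have hρ' : (ρ : ℂ) ≠ 0 := by exact_mod_cast hρ.ne'
  have hbase : ∀ s : ℝ, ((p : ℂ) - Complex.I * s) ∈ Complex.slitPlane := by
    intro s; left; simp [hp]
  have hbne : ∀ s : ℝ, ((p : ℂ) - Complex.I * s) ≠ 0 :=
    fun s => Complex.slitPlane_ne_zero (hbase s)
  -- derivative of f for s ≠ 0
  have hderiv : ∀ s : ℝ, s ≠ 0 →
      deriv f s = -Complex.I * ρ * f s / ((p : ℂ) - Complex.I * s) := by
    intro s hs
    have hs' : (s : ℂ) ≠ 0 := by exact_mod_cast hs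
    have h := hDS s
    field_simp at h
    rw [eq_div_iff (hbne s)]
    apply mul_right_cancel₀ hs'
    linear_combination -h
  -- the auxiliary function h = f · (p - i s)^(-ρ)
  set w : ℝ → ℂ := fun s => ((p : ℂ) - Complex.I * s) ^ (-(ρ : ℂ)) with hw_def
  set h : ℝ → ℂ := fun s => f s * w s with hh_def
  have hw : ∀ s : ℝ, HasDerivAt w
      ((-(ρ : ℂ)) * ((p : ℂ) - Complex.I * s) ^ ((-(ρ : ℂ)) - 1) * (-Complex.I)) s := by
    intro s
    have hu : HasDerivAt (fun z : ℂ => ((p : ℂ) - Complex.I * z)) (-Complex.I) (s : ℂ) := by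
      simpa using ((hasDerivAt_id (s : ℂ)).const_mul Complex.I).const_sub (p : ℂ)
    have hW := hu.cpow_const (c := -(ρ : ℂ)) (hbase s)
    exact hW.comp_ofReal
  have hwd : Differentiable ℝ w := fun s => (hw s).differentiableAt
  have hhd : Differentiable ℝ h := fun s => ((hf s).mul (hwd s))
  have H : ∀ s : ℝ, s ≠ 0 → HasDerivAt h 0 s := by
    intro s hs
    have hd := ((hf s).hasDerivAt).mul (hw s)
    rw [hderiv s hs] at hd
    refine HasDerivAt.congr_deriv hd ?_
    symm
    rw [Complex.cpow_sub _ _ (hbne s), Complex.cpow_one]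
    field_simp
    ring
  have hfderiv : ∀ s : ℝ, s ≠ 0 → fderiv ℝ h s = 0 := by
    intro s hs
    have := (H s hs).hasFDerivAt.fderiv
    rw [this]
    ext x
    simp
  -- constancy of h
  have hconst : ∀ s : ℝ, h s = h 0 := by
    have key : ∀ (U : Set ℝ), IsOpen U → Convex ℝ U → (0:ℝ) ∉ U →
        ∀ a ∈ U, ∀ b ∈ U, h a = h b := by
      intro U hU hUc hU0 a ha b hb
      exact hUc.is_const_of_fderivWithin_eq_zero hhd.differentiableOn
        (fun x hx => by
          rw [fderivWithin_eq_fderiv (hU.uniqueDiffOn x hx) (hhd x)]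
          exact hfderiv x (fun h0 => hU0 (h0 ▸ hx))) ha hb
    intro s
    rcases lt_trichotomy s 0 with hs | hs | hs
    · have hmem : ∀ x ∈ Set.Iio (0:ℝ), h x = h s :=
        fun x hx => key _ isOpen_Iio (convex_Iio 0) (by simp) x hx s hs
      have t1 : Filter.Tendsto h (nhdsWithin 0 (Set.Iio 0)) (nhds (h 0)) :=
        (hhd.continuous.tendsto 0).mono_left nhdsWithin_le_nhds
      have t2 : Filter.Tendsto h (nhdsWithin 0 (Set.Iio 0)) (nhds (h s)) := by
        refine Filter.Tendsto.congr' ?_ tendsto_const_nhds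
        filter_upwards [self_mem_nhdsWithin] with x hx using (hmem x hx).symm
      exact tendsto_nhds_unique t2 t1
    · rw [hs]
    · have hmem : ∀ x ∈ Set.Ioi (0:ℝ), h x = h s :=
        fun x hx => key _ isOpen_Ioi (convex_Ioi 0) (by simp) x hx s hs
      have t1 : Filter.Tendsto h (nhdsWithin 0 (Set.Ioi 0)) (nhds (h 0)) :=
        (hhd.continuous.tendsto 0).mono_left nhdsWithin_le_nhds
      have t2 : Filter.Tendsto h (nhdsWithin 0 (Set.Ioi 0)) (nhds (h s)) := by
        refine Filter.Tendsto.congr' ?_ tendsto_const_nhds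
        filter_upwards [self_mem_nhdsWithin] with x hx using (hmem x hx).symm
      exact tendsto_nhds_unique t2 t1
  -- compute |f s|
  have main : ∀ s : ℝ, ‖f s‖ = ((s ^ 2 + p ^ 2) / p ^ 2) ^ (ρ / 2) := by
    intro s
    set A : ℝ := ‖(p : ℂ) - Complex.I * s‖ with hA_def
    have hA : 0 < A := norm_pos_iff.mpr (hbne s)
    have hA2 : A ^ 2 = s ^ 2 + p ^ 2 := by
      rw [hA_def, Complex.sq_norm, Complex.normSq_apply]
      simp [Complex.sub_re, Complex.sub_im]
      ring
    have hwabs : ∀ t : ℝ, ‖w t‖ =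
        (‖(p : ℂ) - Complex.I * t‖) ^ (-ρ : ℝ) := by
      intro t
      have : (-(ρ : ℂ)) = ((-ρ : ℝ) : ℂ) := by push_cast; ring
      rw [hw_def]; simp only []
      rw [this, Complex.norm_cpow_real]
    have habs0 : ‖w 0‖ = p ^ (-ρ : ℝ) := by
      rw [hwabs 0]
      norm_num [Complex.norm_real, abs_of_pos hp]
    have heq : ‖f s‖ * A ^ (-ρ : ℝ) = p ^ (-ρ : ℝ) := by
      have := congrArg (‖·‖) (hconst s)
      rw [hh_def] at this
      simpa [norm_mul, hf0, hwabs s, habs0, hA_def] using this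
    have hApos : (0:ℝ) < A ^ (-ρ : ℝ) := Real.rpow_pos_of_pos hA _
    have hfs : ‖f s‖ = (A / p) ^ ρ := by
      apply mul_right_cancel₀ hApos.ne'
      rw [heq, Real.div_rpow hA.le hp.le, div_mul_eq_mul_div,
        ← Real.rpow_add hA, add_neg_cancel, Real.rpow_zero]
      rw [Real.rpow_neg hp.le]
      field_simp
    rw [hfs]
    have hbase2 : (s ^ 2 + p ^ 2) / p ^ 2 = (A / p) ^ (2:ℕ) := by
      rw [div_pow, hA2]
    rw [hbase2, ← Real.rpow_natCast (A / p) 2, ← Real.rpow_mul (by positivity)]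
    congr 1
    push_cast
    ring
  refine ⟨main, ?_, ?_⟩
  · intro s hs
    rw [main s]
    rw [Real.one_lt_rpow_iff_of_pos (by positivity)]
    left
    constructor
    · rw [lt_div_iff₀ (by positivity)]
      nlinarith [sq_pos_of_ne_zero hs]
    · positivity
  · rintro ⟨μ, hμ, hchar⟩
    have hgt : 1 < ‖f 1‖ := by
      rw [main 1]
      rw [Real.one_lt_rpow_iff_of_pos (by positivity)]
      left
      exact ⟨by rw [lt_div_iff₀ (by positivity)]; nlinarith, by positivity⟩
    have hle : ‖f 1‖ ≤ 1 := by
      rw [hchar 1]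
      calc ‖∫ x : ℝ, Complex.exp (Complex.I * (1 : ℂ) * (x : ℂ)) ∂μ‖
          ≤ 1 * (μ Set.univ).toReal := by
            apply norm_integral_le_of_norm_le_const
            filter_upwards with x
            rw [Complex.norm_exp]
            simp
        _ = 1 := by simp [hμ.measure_univ]
    exact absurd hgt (not_lt.2 hle)
end
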